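/- Let R be a commutative ring and let E be a GV-torsion-free injective R-module (equivalently, an injective w-module). Then the following are equivalent: (1) Hom_R(A, E) ≠ 0 for every nonzero w-module A; (2) Hom_R(B, E) ≠ 0 for every nonzero GV-torsion-free R-module B; (3) Hom_R(R/I, E) ≠ 0 for every proper w-ideal I of R; (4) Hom_R(R/m, E) ≠ 0 for every m ∈ w-Max(R). -/

import Mathlib

universe u v

section WDefs

variable (R : Type u) [CommRing R]

/-- The canonical `R`-linear map `R → Hom_R(J, R)`, `r ↦ (j ↦ r * j)`. -/
def gvCanonicalMap (J : Ideal R) : R →ₗ[R] (J →ₗ[R] R) where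
  toFun r := r • (J.subtype)
  map_add' x y := add_smul x y _
  map_smul' r x := by simp [mul_smul]

/-- A finitely generated ideal `J` of `R` is a GV-ideal (Glaz–Vasconcelos ideal)
if the canonical map `R → Hom_R(J, R)` is an isomorphism. -/
def IsGVIdeal (J : Ideal R) : Prop :=
  J.FG ∧ Function.Bijective (gvCanonicalMap R J)

/-- An ideal `I` of `R` is a w-ideal if whenever `J x ⊆ I` for some GV-ideal `J`,
then `x ∈ I`. -/
def IsWIdeal (I : Ideal R) : Prop :=
  ∀ x : R, (∃ J : Ideal R, IsGVIdeal R J ∧ ∀ j ∈ J, j * x ∈ I) → x ∈ I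

/-- `m` is a maximal w-ideal: maximal among the proper w-ideals of `R`. -/
def IsMaxWIdeal (m : Ideal R) : Prop :=
  IsWIdeal R m ∧ m ≠ ⊤ ∧ ∀ I : Ideal R, IsWIdeal R I → I ≠ ⊤ → m ≤ I → I = m

variable {M : Type v} [AddCommGroup M] [Module R M]

/-- `x` is a GV-torsion element if it is killed by some GV-ideal. -/
def IsGVTorsionElem (x : M) : Prop :=
  ∃ J : Ideal R, IsGVIdeal R J ∧ ∀ j ∈ J, j • x = 0

variable (M)

/-- `M` is GV-torsion-free if it has no nonzero GV-torsion element. -/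
def IsGVTorsionFree : Prop := ∀ x : M, IsGVTorsionElem R x → x = 0

/-- `M` is GV-torsion if all its elements are GV-torsion. -/
def IsGVTorsion : Prop := ∀ x : M, IsGVTorsionElem R x

/-- `M` is a w-module: GV-torsion-free and every map from a GV-ideal to `M`
extends to `R`. -/
def IsWModule : Prop :=
  IsGVTorsionFree R M ∧
    ∀ J : Ideal R, IsGVIdeal R J → ∀ f : J →ₗ[R] M,
      ∃ g : R →ₗ[R] M, ∀ x : J, g (x : R) = f x

end WDefs

/-!
(1) ⇒ (2): a nonzero GV-torsion-free module `B` embeds in its w-envelope `B_w`, a w-module with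
`B_w / B` GV-torsion; a nonzero map `B_w → E` cannot vanish on `B` because `E` is GV-torsion-free.
`B_w` is the w-closure of `B` inside a GV-torsion-free injective module, namely an injective hull
of `B` carved out of an injective module by two applications of Zorn's lemma.
(3) ⇒ (2): for `b ≠ 0` the annihilator of `b` is a proper w-ideal, `R / ann b ≅ R b`, and maps
out of `R b` extend to `B` by injectivity of `E`. (4) ⇒ (3): every proper w-ideal lies in a
maximal w-ideal, since GV-ideals are finitely generated. The remaining implications are direct.
-/

section GVIdeal

variable {R : Type u} [CommRing R] {J K : Ideal R}

@[simp]
theorem gvCanonicalMap_apply (r : R) (j : J) : gvCanonicalMap R J r j = r * j := rfl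

theorem IsGVIdeal.eq_zero_of_mul_eq_zero (hJ : IsGVIdeal R J) {r : R}
    (h : ∀ j ∈ J, r * j = 0) : r = 0 :=
  hJ.2.1 <| LinearMap.ext fun j => by simpa using h j j.2

noncomputable def IsGVIdeal.equiv (hJ : IsGVIdeal R J) : R ≃ₗ[R] (J →ₗ[R] R) :=
  LinearEquiv.ofBijective _ hJ.2

theorem IsGVIdeal.apply_eq_mul (hJ : IsGVIdeal R J) (f : J →ₗ[R] R) (j : J) :
    f j = hJ.equiv.symm f * j := by
  conv_lhs => rw [← hJ.equiv.apply_symm_apply f]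
  rfl

theorem isGVIdeal_top : IsGVIdeal R ⊤ := by
  refine ⟨⟨{1}, by simp⟩, fun a b hab => ?_, fun f => ⟨f ⟨1, trivial⟩, ?_⟩⟩
  · simpa using LinearMap.congr_fun hab ⟨1, trivial⟩
  · ext j
    rw [gvCanonicalMap_apply, mul_comm, ← smul_eq_mul, ← map_smul]
    congr 1
    ext
    simp

theorem IsGVIdeal.mul (hJ : IsGVIdeal R J) (hK : IsGVIdeal R K) : IsGVIdeal R (J * K) := by
  refine ⟨hJ.1.mul hK.1, fun a b hab => ?_, fun f => ?_⟩
  · rw [← sub_eq_zero]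
    refine hJ.eq_zero_of_mul_eq_zero fun j hj => hK.eq_zero_of_mul_eq_zero fun k hk => ?_
    have := LinearMap.congr_fun hab ⟨j * k, Ideal.mul_mem_mul hj hk⟩
    simp only [gvCanonicalMap_apply] at this
    linear_combination this
  · let Φ : J →ₗ[R] K →ₗ[R] R := LinearMap.mk₂ R
      (fun j k => f ⟨j * k, Ideal.mul_mem_mul j.2 k.2⟩)
      (fun j j' k => by rw [← map_add]; congr 1; ext; simp [add_mul])
      (fun r j k => by rw [← map_smul]; congr 1; ext; simp [mul_assoc])
      (fun j k k' => by rw [← map_add]; congr 1; ext; simp [mul_add])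
      (fun r j k => by rw [← map_smul]; congr 1; ext; simp [mul_left_comm])
    let ψ : J →ₗ[R] R := hK.equiv.symm.toLinearMap ∘ₗ Φ
    refine ⟨hJ.equiv.symm ψ, LinearMap.ext fun ⟨x, hx⟩ => ?_⟩
    induction hx using Submodule.mul_induction_on' with
    | mem_mul_mem j hj k hk =>
      have hjk := hK.apply_eq_mul (Φ ⟨j, hj⟩) ⟨k, hk⟩
      rw [← LinearEquiv.coe_toLinearMap, ← LinearMap.comp_apply,
        hJ.apply_eq_mul ψ ⟨j, hj⟩] at hjk
      rw [gvCanonicalMap_apply, ← mul_assoc]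
      exact hjk.symm
    | add y hy z hz hy' hz' =>
      simp only [gvCanonicalMap_apply] at hy' hz' ⊢
      rw [mul_add, hy', hz', ← map_add]
      rfl

end GVIdeal

section WClosure

variable {R : Type u} [CommRing R] {M : Type v} [AddCommGroup M] [Module R M]

def Submodule.wClosure (S : Submodule R M) : Submodule R M where
  carrier := {x : M | ∃ J : Ideal R, IsGVIdeal R J ∧ ∀ j ∈ J, j • x ∈ S}
  add_mem' := by
    rintro x y ⟨J, hJ, hx⟩ ⟨K, hK, hy⟩
    refine ⟨J * K, hJ.mul hK, fun j hj => ?_⟩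
    rw [smul_add]
    exact S.add_mem (hx j (Ideal.mul_le_left hj)) (hy j (Ideal.mul_le_right hj))
  zero_mem' := ⟨⊤, isGVIdeal_top, fun j _ => by rw [smul_zero]; exact S.zero_mem⟩
  smul_mem' := by
    rintro r x ⟨J, hJ, hx⟩
    exact ⟨J, hJ, fun j hj => by rw [smul_comm]; exact S.smul_mem r (hx j hj)⟩

namespace Submodule

variable {S : Submodule R M}

theorem le_wClosure : S ≤ S.wClosure :=
  fun _ hx => ⟨⊤, isGVIdeal_top, fun j _ => S.smul_mem j hx⟩

theorem exists_isGVIdeal_forall_smul_mem (t : Finset M) (ht : ∀ y ∈ t, y ∈ S.wClosure) :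
    ∃ K : Ideal R, IsGVIdeal R K ∧ ∀ y ∈ t, ∀ k ∈ K, k • y ∈ S := by
  classical
  induction t using Finset.induction_on with
  | empty => exact ⟨⊤, isGVIdeal_top, by simp⟩
  | insert a t _ ih =>
    obtain ⟨K, hK, hKt⟩ := ih fun y hy => ht y (Finset.mem_insert_of_mem hy)
    obtain ⟨L, hL, hLa⟩ := ht a (Finset.mem_insert_self a t)
    refine ⟨K * L, hK.mul hL, fun y hy k hk => ?_⟩
    rcases Finset.mem_insert.mp hy with rfl | hy
    · exact hLa k (Ideal.mul_le_right hk)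
    · exact hKt y hy k (Ideal.mul_le_left hk)

/-- As `J` is finitely generated, one GV-ideal moves all of `J x` into `S`. -/
theorem mem_wClosure_of_smul_mem {J : Ideal R} (hJ : IsGVIdeal R J) {x : M}
    (h : ∀ j ∈ J, j • x ∈ S.wClosure) : x ∈ S.wClosure := by
  classical
  obtain ⟨s, hs⟩ := hJ.1
  obtain ⟨K, hK, hKs⟩ := exists_isGVIdeal_forall_smul_mem (s.image (· • x))
    (by simpa using fun a ha => h a (hs ▸ Ideal.subset_span ha))
  refine ⟨K * J, hK.mul hJ, fun j hj => ?_⟩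
  suffices K * J ≤ S.comap (LinearMap.toSpanSingleton R M x) by simpa using this hj
  refine Ideal.mul_le.mpr fun k hk a ha => ?_
  suffices J ≤ S.comap (LinearMap.toSpanSingleton R M (k • x)) by
    simpa [mul_comm k, mul_smul] using this ha
  rw [← hs, Ideal.span_le]
  intro a ha
  simpa [smul_comm a k] using hKs _ (Finset.mem_image_of_mem _ ha) k hk

end Submodule

end WClosure

section WModule

variable {R : Type u} [CommRing R] {M : Type v} [AddCommGroup M] [Module R M]
  {N : Type*} [AddCommGroup N] [Module R N]

theorem IsGVTorsionFree.of_injective (hN : IsGVTorsionFree R N) {f : M →ₗ[R] N}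
    (hf : Function.Injective f) : IsGVTorsionFree R M := by
  rintro x ⟨J, hJ, hx⟩
  refine hf ?_
  rw [map_zero]
  exact hN _ ⟨J, hJ, fun j hj => by rw [← map_smul, hx j hj, map_zero]⟩

theorem IsGVTorsionFree.of_essential {S : Submodule R M} (hS : IsGVTorsionFree R S)
    (hess : ∀ x : M, x ≠ 0 → ∃ r : R, r • x ∈ S ∧ r • x ≠ 0) : IsGVTorsionFree R M := by
  rintro x ⟨J, hJ, hx⟩
  by_contra hne
  obtain ⟨r, hrS, hr0⟩ := hess x hne
  refine hr0 (congrArg Subtype.val (hS ⟨r • x, hrS⟩ ⟨J, hJ, fun j hj => ?_⟩))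
  ext
  simp [smul_comm j r, hx j hj]

theorem IsGVTorsion.linearMap_eq_zero (hM : IsGVTorsion R M) (hN : IsGVTorsionFree R N)
    (f : M →ₗ[R] N) : f = 0 := by
  ext x
  obtain ⟨J, hJ, hx⟩ := hM x
  exact hN _ ⟨J, hJ, fun j hj => by rw [← map_smul, hx j hj, map_zero]⟩

theorem Module.Baer.isWModule (hM : Module.Baer R M) (htf : IsGVTorsionFree R M) :
    IsWModule R M :=
  ⟨htf, fun J _ f => (hM J f).imp fun _ hg x => hg x x.2⟩

theorem Module.Baer.of_retraction (hM : Module.Baer R M) {D : Submodule R M}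
    (p : M →ₗ[R] D) (hp : ∀ d : D, p d = d) : Module.Baer R D := fun I g => by
  obtain ⟨G, hG⟩ := hM I (D.subtype ∘ₗ g)
  exact ⟨p ∘ₗ G, fun x hx => by simp [hG x hx, hp]⟩

namespace Submodule

theorem isWModule_wClosure (hM : IsWModule R M) (S : Submodule R M) :
    IsWModule R S.wClosure := by
  refine ⟨hM.1.of_injective S.wClosure.injective_subtype, fun J hJ f => ?_⟩
  obtain ⟨g, hg⟩ := hM.2 J hJ (S.wClosure.subtype ∘ₗ f)
  have hmem : g 1 ∈ S.wClosure := mem_wClosure_of_smul_mem hJ fun j hj => by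
    rw [← map_smul, smul_eq_mul, mul_one, hg ⟨j, hj⟩]
    exact (f _).2
  refine ⟨LinearMap.toSpanSingleton R _ ⟨g 1, hmem⟩, fun j => Subtype.ext ?_⟩
  simpa [← map_smul] using hg j

theorem isGVTorsion_wClosure_quotient (S : Submodule R M) :
    IsGVTorsion R (S.wClosure ⧸ S.comap S.wClosure.subtype) := by
  intro x
  obtain ⟨⟨x, J, hJ, hx⟩, rfl⟩ := mkQ_surjective _ x
  exact ⟨J, hJ, fun j hj => by
    rw [← map_smul, mkQ_apply, Quotient.mk_eq_zero]
    exact hx j hj⟩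

end Submodule

end WModule

theorem exists_le_maximal_disjoint {α : Type*} [CompleteLattice α] [IsCompactlyGenerated α]
    {a b : α} (h : Disjoint a b) : ∃ c, a ≤ c ∧ Maximal (Disjoint · b) c := by
  obtain ⟨c, hac, hc⟩ := zorn_le_nonempty₀ {c | Disjoint c b}
    (fun s hs hchain y hy => ⟨sSup s,
      (hchain.directedOn.disjoint_sSup_left).mpr fun _ hz => hs hz, fun _ => le_sSup⟩) a h
  exact ⟨c, hac, hc⟩

section InjectiveHull

variable {R : Type u} [CommRing R] {Q : Type v} [AddCommGroup Q] [Module R Q]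

theorem Submodule.exists_add_smul_mem_of_maximal_disjoint {B C : Submodule R Q}
    (hC : Maximal (Disjoint · B) C) {x : Q} (hx : x ∉ C) :
    ∃ c ∈ C, ∃ r : R, c + r • x ∈ B ∧ c + r • x ≠ 0 := by
  have hsup : ¬Disjoint (C ⊔ R ∙ x) B := fun hdisj =>
    hx (hC.le_of_ge hdisj le_sup_left (mem_sup_right (mem_span_singleton_self x)))
  obtain ⟨y, hy, hy0⟩ := exists_mem_ne_zero_of_ne_bot (disjoint_iff.not.mp hsup)
  obtain ⟨c, hc, _, hrx, rfl⟩ := mem_sup.mp (mem_inf.mp hy).1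
  obtain ⟨r, rfl⟩ := mem_span_singleton.mp hrx
  exact ⟨c, hc, r, (mem_inf.mp hy).2, hy0⟩

theorem Module.Injective.exists_projection_of_disjoint [Module.Injective R Q]
    {C D : Submodule R Q} (h : Disjoint C D) :
    ∃ e : Q →ₗ[R] Q, (∀ c ∈ C, e c = c) ∧ ∀ d ∈ D, e d = 0 := by
  have hinj : Function.Injective (D.mkQ ∘ₗ C.subtype) := by
    rw [← LinearMap.ker_eq_bot, LinearMap.ker_comp, Submodule.ker_mkQ,
      ← Submodule.disjoint_iff_comap_eq_bot]
    exact h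
  obtain ⟨g, hg⟩ := Module.Injective.out _ hinj C.subtype
  exact ⟨g ∘ₗ D.mkQ, fun c hc => hg ⟨c, hc⟩, fun d hd => by
    simp [(Submodule.Quotient.mk_eq_zero D).mpr hd]⟩

/-- An injective hull of `B` inside `Q`: with `C` maximal disjoint from `B` and `D ⊇ B` maximal
disjoint from `C`, a projection with kernel `D` and image `C` splits `Q = C ⊕ D`, and maximality
of `C` makes `D` essential over `B`. -/
theorem Module.Injective.exists_essential_retract [Module.Injective R Q] (B : Submodule R Q) :
    ∃ D : Submodule R Q, B ≤ D ∧ (∀ x ∈ D, x ≠ 0 → ∃ r : R, r • x ∈ B ∧ r • x ≠ 0) ∧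
      ∃ p : Q →ₗ[R] D, ∀ d : D, p d = d := by
  obtain ⟨C, -, hC⟩ := exists_le_maximal_disjoint (disjoint_bot_left (a := B))
  obtain ⟨D, hBD, hD⟩ := exists_le_maximal_disjoint hC.prop.symm
  obtain ⟨e, heC, heD⟩ := exists_projection_of_disjoint hD.prop.symm
  have hker : LinearMap.ker e ≤ D := hD.le_of_ge
    (Submodule.disjoint_def.mpr fun x hx hxC => (heC x hxC).symm.trans hx)
    fun d hd => heD d hd
  have hrange : LinearMap.range e ≤ C := by
    refine hC.le_of_ge (Submodule.disjoint_def.mpr ?_) fun c hc => ⟨c, heC c hc⟩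
    rintro _ ⟨q, rfl⟩ hqB
    by_contra hq0
    obtain ⟨d, hd, r, hC', hne⟩ :=
      Submodule.exists_add_smul_mem_of_maximal_disjoint hD fun hq => hq0 (heD q hq)
    have : d + r • q = r • e q := by rw [← heC _ hC', map_add, map_smul, heD d hd, zero_add]
    exact hne (Submodule.disjoint_def.mp hC.prop _ hC' (this ▸ B.smul_mem r hqB))
  refine ⟨D, hBD, fun x hxD hx0 => ?_, (LinearMap.id - e).codRestrict D fun q => hker ?_,
    fun d => Subtype.ext (by simp [heD d d.2])⟩
  · have hxC : x ∉ C := fun hxC => hx0 (Submodule.disjoint_def.mp hD.prop x hxD hxC)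
    obtain ⟨c, hc, r, hB, hne⟩ := Submodule.exists_add_smul_mem_of_maximal_disjoint hC hxC
    have hcD : c ∈ D := by
      simpa using D.sub_mem (hBD hB) (D.smul_mem r hxD)
    rw [Submodule.disjoint_def.mp hD.prop c hcD hc, zero_add] at hB hne
    exact ⟨r, hB, hne⟩
  · simp [heC (e q) (hrange ⟨q, rfl⟩)]

end InjectiveHull

theorem Module.exists_injective_extension (R : Type u) [CommRing R] (B : Type u)
    [AddCommGroup B] [Module R B] :
    ∃ (Q : Type u) (_ : AddCommGroup Q) (_ : Module R Q), Module.Injective R Q ∧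
      ∃ i : B →ₗ[R] Q, Function.Injective i := by
  let ι := CategoryTheory.Injective.ι (ModuleCat.of R B)
  exact ⟨_, _, _, Module.injective_module_of_injective_object R _
    (inj := by rw [ModuleCat.of_coe]; infer_instance), ι.hom,
    (ModuleCat.mono_iff_injective ι).mp inferInstance⟩

section WEnvelope

variable {R : Type u} [CommRing R] {B : Type u} [AddCommGroup B] [Module R B]

theorem exists_injective_isGVTorsionFree_extension (hB : IsGVTorsionFree R B) :
    ∃ (Q : Type u) (_ : AddCommGroup Q) (_ : Module R Q), Module.Injective R Q ∧
      IsGVTorsionFree R Q ∧ ∃ i : B →ₗ[R] Q, Function.Injective i := by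
  obtain ⟨Q, _, _, hQ, i, hi⟩ := Module.exists_injective_extension R B
  obtain ⟨D, hBD, hess, p, hp⟩ := Module.Injective.exists_essential_retract (LinearMap.range i)
  let j : B →ₗ[R] D := i.codRestrict D fun b => hBD ⟨b, rfl⟩
  have hj : Function.Injective j := fun a b hab => hi (congrArg Subtype.val hab)
  refine ⟨D, _, _, ((Module.Baer.of_injective hQ).of_retraction p hp).injective, ?_, j, hj⟩
  refine IsGVTorsionFree.of_essential (S := LinearMap.range j)
    (hB.of_injective (LinearEquiv.ofInjective j hj).symm.injective) fun x hx => ?_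
  rw [LinearMap.range_codRestrict]
  obtain ⟨r, hr, hr0⟩ := hess x x.2 (by simpa using hx)
  exact ⟨r, hr, fun h => hr0 (by rw [← Submodule.coe_smul, h, Submodule.coe_zero])⟩

theorem exists_wEnvelope (hB : IsGVTorsionFree R B) :
    ∃ (W : Type u) (_ : AddCommGroup W) (_ : Module R W) (i : B →ₗ[R] W),
      IsWModule R W ∧ Function.Injective i ∧ IsGVTorsion R (W ⧸ LinearMap.range i) := by
  obtain ⟨Q, _, _, hQ, hQtf, i, hi⟩ := exists_injective_isGVTorsionFree_extension hB
  let S := LinearMap.range i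
  refine ⟨S.wClosure, _, _, i.codRestrict _ fun b => Submodule.le_wClosure ⟨b, rfl⟩,
    S.isWModule_wClosure ((Module.Baer.of_injective hQ).isWModule hQtf),
    fun a b hab => hi (congrArg Subtype.val hab), ?_⟩
  rw [LinearMap.range_codRestrict]
  exact S.isGVTorsion_wClosure_quotient

end WEnvelope

section WIdeal

variable {R : Type u} [CommRing R]

theorem isWIdeal_iff_isGVTorsionFree_quotient (I : Ideal R) :
    IsWIdeal R I ↔ IsGVTorsionFree R (R ⧸ I) := by
  refine ⟨fun hI x ⟨J, hJ, hx⟩ => ?_, fun hI x ⟨J, hJ, hx⟩ => ?_⟩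
  · obtain ⟨r, rfl⟩ := Ideal.Quotient.mk_surjective x
    refine Ideal.Quotient.eq_zero_iff_mem.mpr (hI r ⟨J, hJ, fun j hj => ?_⟩)
    exact Ideal.Quotient.eq_zero_iff_mem.mp (hx j hj)
  · refine Ideal.Quotient.eq_zero_iff_mem.mp (hI _ ⟨J, hJ, fun j hj => ?_⟩)
    exact Ideal.Quotient.eq_zero_iff_mem.mpr (hx j hj)

theorem isWIdeal_torsionOf {M : Type v} [AddCommGroup M] [Module R M]
    (hM : IsGVTorsionFree R M) (x : M) : IsWIdeal R (Ideal.torsionOf R M x) :=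
  (isWIdeal_iff_isGVTorsionFree_quotient _).mpr <| hM.of_injective
    (f := (R ∙ x).subtype ∘ₗ (Ideal.quotTorsionOfEquivSpanSingleton R M x).toLinearMap)
    ((R ∙ x).injective_subtype.comp (Ideal.quotTorsionOfEquivSpanSingleton R M x).injective)

theorem IsWIdeal.sSup_of_directedOn {c : Set (Ideal R)} (hne : c.Nonempty)
    (hdir : DirectedOn (· ≤ ·) c) (hc : ∀ I ∈ c, IsWIdeal R I) : IsWIdeal R (sSup c) := by
  rintro x ⟨J, hJ, hx⟩
  have hle : J * (R ∙ x) ≤ sSup c := Ideal.mul_le.mpr fun j hj s hs => by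
    obtain ⟨a, rfl⟩ := Submodule.mem_span_singleton.mp hs
    simpa [mul_left_comm j a] using (sSup c).mul_mem_left a (hx j hj)
  obtain ⟨I, hIc, hJI⟩ := (CompleteLattice.isCompactElement_iff_le_of_directed_sSup_le _ _).mp
    ((Submodule.fg_iff_compact _).mp (hJ.1.mul (Submodule.fg_span_singleton x))) c hne hdir hle
  exact le_sSup hIc <| hc I hIc x
    ⟨J, hJ, fun j hj => hJI (Ideal.mul_mem_mul hj (Submodule.mem_span_singleton_self x))⟩

theorem exists_isMaxWIdeal_le {I : Ideal R} (hI : IsWIdeal R I) (hne : I ≠ ⊤) :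
    ∃ m, IsMaxWIdeal R m ∧ I ≤ m := by
  have hchain : ∀ c ⊆ {I : Ideal R | IsWIdeal R I ∧ I ≠ ⊤}, IsChain (· ≤ ·) c → ∀ J ∈ c,
      ∃ ub ∈ {I : Ideal R | IsWIdeal R I ∧ I ≠ ⊤}, ∀ I ∈ c, I ≤ ub := by
    intro c hc hchain J hJ
    refine ⟨sSup c, ⟨IsWIdeal.sSup_of_directedOn ⟨J, hJ⟩ hchain.directedOn
      fun I hI => (hc hI).1, fun htop => ?_⟩, fun _ => le_sSup⟩
    obtain ⟨I, hIc, h1⟩ := (Submodule.mem_sSup_of_directed ⟨J, hJ⟩ hchain.directedOn).mp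
      (htop ▸ Submodule.mem_top : (1 : R) ∈ sSup c)
    exact (hc hIc).2 ((Ideal.eq_top_iff_one I).mpr h1)
  obtain ⟨m, hIm, hm⟩ := zorn_le_nonempty₀ _ hchain I ⟨hI, hne⟩
  exact ⟨m, ⟨hm.prop.1, hm.prop.2, fun I hIw hIne hmI =>
    le_antisymm (hm.le_of_ge ⟨hIw, hIne⟩ hmI) hmI⟩, hIm⟩

end WIdeal

section NonzeroHom

variable {R : Type u} [CommRing R] {E : Type v} [AddCommGroup E] [Module R E]

theorem exists_ne_zero_of_le {I m : Ideal R} (h : I ≤ m) {f : (R ⧸ m) →ₗ[R] E} (hf : f ≠ 0) :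
    ∃ g : (R ⧸ I) →ₗ[R] E, g ≠ 0 :=
  ⟨f ∘ₗ Submodule.factor h, fun h0 => hf <| (LinearMap.cancel_right
    (Submodule.factor_surjective h)).mp (h0.trans (LinearMap.zero_comp _).symm)⟩

theorem Module.Injective.exists_ne_zero_of_torsionOf [Module.Injective R E] {M : Type v}
    [AddCommGroup M] [Module R M] (x : M) {g : (R ⧸ Ideal.torsionOf R M x) →ₗ[R] E}
    (hg : g ≠ 0) : ∃ f : M →ₗ[R] E, f ≠ 0 := by
  obtain ⟨f, hf⟩ := Module.Injective.out (R ∙ x).subtype (R ∙ x).injective_subtype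
    (g ∘ₗ (Ideal.quotTorsionOfEquivSpanSingleton R M x).symm.toLinearMap)
  refine ⟨f, fun h0 => hg (LinearMap.ext fun y => ?_)⟩
  simpa [h0] using (hf (Ideal.quotTorsionOfEquivSpanSingleton R M x y)).symm

theorem IsGVTorsion.eq_zero_of_le_ker {M : Type*} [AddCommGroup M] [Module R M]
    {S : Submodule R M} (hS : IsGVTorsion R (M ⧸ S)) (hE : IsGVTorsionFree R E)
    {f : M →ₗ[R] E} (h : S ≤ LinearMap.ker f) : f = 0 := by
  rw [← S.liftQ_mkQ f h, hS.linearMap_eq_zero hE (S.liftQ f h), LinearMap.zero_comp]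

end NonzeroHom

/-- w-version of Ishikawa's Theorem 3.1: for a GV-torsion-free injective
`R`-module `E`, TFAE:
(1) `Hom_R(A, E) ≠ 0` for every nonzero w-module `A`;
(2) `Hom_R(B, E) ≠ 0` for every nonzero GV-torsion-free module `B`;
(3) `Hom_R(R/I, E) ≠ 0` for every proper w-ideal `I`;
(4) `Hom_R(R/m, E) ≠ 0` for every maximal w-ideal `m`. -/
theorem wFaithfullyInjective_tfae (R : Type u) [CommRing R] (E : Type u)
    [AddCommGroup E] [Module R E] (htf : IsGVTorsionFree R E)
    (hinj : Module.Injective R E) :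
    List.TFAE [
      ∀ (A : Type u) [AddCommGroup A] [Module R A], IsWModule R A → Nontrivial A →
        ∃ f : A →ₗ[R] E, f ≠ 0,
      ∀ (B : Type u) [AddCommGroup B] [Module R B], IsGVTorsionFree R B → Nontrivial B →
        ∃ f : B →ₗ[R] E, f ≠ 0,
      ∀ I : Ideal R, IsWIdeal R I → I ≠ ⊤ → ∃ f : (R ⧸ I) →ₗ[R] E, f ≠ 0,
      ∀ m : Ideal R, IsMaxWIdeal R m → ∃ f : (R ⧸ m) →ₗ[R] E, f ≠ 0 ] := by
  tfae_have 2 → 1 := fun h2 A _ _ hA => h2 A hA.1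
  tfae_have 1 → 2 := by
    intro h1 B _ _ hB _
    obtain ⟨W, _, _, i, hW, hi, htor⟩ := exists_wEnvelope hB
    obtain ⟨f, hf⟩ := h1 W hW hi.nontrivial
    exact ⟨f ∘ₗ i, fun h0 => hf (htor.eq_zero_of_le_ker htf (LinearMap.range_le_ker_iff.mpr h0))⟩
  tfae_have 2 → 3 := fun h2 I hI hne =>
    h2 _ ((isWIdeal_iff_isGVTorsionFree_quotient I).mp hI) (Ideal.Quotient.nontrivial_iff.mpr hne)
  tfae_have 3 → 2 := by
    intro h3 B _ _ hB _
    obtain ⟨b, hb⟩ := exists_ne (0 : B)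
    obtain ⟨g, hg⟩ := h3 _ (isWIdeal_torsionOf hB b) ((Ideal.torsionOf_eq_top_iff R b).not.mpr hb)
    exact hinj.exists_ne_zero_of_torsionOf b hg
  tfae_have 3 → 4 := fun h3 m hm => h3 m hm.1 hm.2.1
  tfae_have 4 → 3 := fun h4 I hI hne => by
    obtain ⟨m, hm, hIm⟩ := exists_isMaxWIdeal_le hI hne
    obtain ⟨f, hf⟩ := h4 m hm
    exact exists_ne_zero_of_le hIm hf
  tfae_finish
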